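/- Let M : S → ℂ with M(1) = 1 and let L be its admissible cumulants. For every s ∈ S⁺ and every admissible partition u = (u_1,…,u_p) ∈ AP(s), setting M(u) = M(u_1)⋯M(u_p) and L(v) = L(v_1)⋯L(v_m) for v = (v_1,…,v_m) ∈ AP(s), one has M(u) = Σ_{v∈AP(s), v≤u} L(v), where v ≤ u means that v refines u. -/

import Mathlib

/-- The two-letter alphabet `{z, w}`. -/
inductive Letter | z | w
deriving DecidableEq

/-- Words: elements of the free monoid `S = FS({z,w})`. -/
abbrev Word := List Letter

/-- The letter of `s` at position `j` (defaulting to `z`). -/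
def letterAt (s : Word) (j : ℕ) : Letter := s.getD j Letter.z

/-- `P` is a partition of the finite set of positions `g ⊆ ℕ` into nonempty blocks. -/
def IsPartitionOn (g : Finset ℕ) (P : Finset (Finset ℕ)) : Prop :=
  (∀ b ∈ P, b.Nonempty) ∧ (P : Set (Finset ℕ)).PairwiseDisjoint id ∧ P.sup id = g

/-- The position `j` is inner with respect to the block `b`:
`j ∉ b` and `min b < j < max b`. -/
def InnerPos (j : ℕ) (b : Finset ℕ) : Prop :=
  j ∉ b ∧ ∃ i ∈ b, ∃ k ∈ b, i < j ∧ j < k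

/-- A partition is admissible if no block contains a letter `w` that is inner
with respect to another block. -/
def Admissible (s : Word) (P : Finset (Finset ℕ)) : Prop :=
  ∀ b ∈ P, ∀ b' ∈ P, b ≠ b' → ∀ j ∈ b, letterAt s j = Letter.w → ¬ InnerPos j b'

open scoped Classical in
/-- The set `AP(s)` of admissible partitions of the positions `g` of the word `s`. -/
noncomputable def APfin (s : Word) (g : Finset ℕ) : Finset (Finset (Finset ℕ)) :=
  g.powerset.powerset.filter fun P => IsPartitionOn g P ∧ Admissible s P

/-- The subword of `s` determined by a set of positions `b`. -/
def wordOf (s : Word) (b : Finset ℕ) : Word :=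
  (b.sort (· ≤ ·)).map (letterAt s)

/-- `L` is the family of admissible cumulants of the moment function `M`:
`M(s) = Σ_{u ∈ AP(s)} L(u₁)⋯L(u_p)` for every nonempty word `s`. -/
def IsCumulants (M L : Word → ℂ) : Prop :=
  ∀ s : Word, s ≠ [] →
    M s = ∑ P ∈ APfin s (Finset.range s.length), ∏ b ∈ P, L (wordOf s b)

/-- `P` refines `Q`: every block of `P` is contained in a block of `Q`. -/
def Refines (P Q : Finset (Finset ℕ)) : Prop := ∀ b ∈ P, ∃ c ∈ Q, b ⊆ c

open scoped Classical in
/-- `m` is the Möbius function of the lattice `AP(s)` of admissible partitions of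
the position set `g` of `s`: `m(u|u) = 1` and `m(u|v) = −Σ_{u ≤ t < v} m(u|t)`. -/
noncomputable def IsMobius (s : Word) (g : Finset ℕ)
    (m : Finset (Finset ℕ) → Finset (Finset ℕ) → ℂ) : Prop :=
  (∀ u ∈ APfin s g, m u u = 1) ∧
    ∀ u ∈ APfin s g, ∀ v ∈ APfin s g, Refines u v → u ≠ v →
      m u v = -∑ t ∈ (APfin s g).filter fun t => Refines u t ∧ Refines t v ∧ t ≠ v, m u t

/-!
Expanding each factor `M(u_k)` by the defining recursion, applied to the subword carried by the
block `u_k`, turns `M(u)` into a sum over tuples of admissible partitions of the blocks of `u`.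
Gluing a tuple gives an admissible partition refining `u`, and every refinement arises exactly
once: a letter `w` of one block of `u` that is inner to a piece of another block of `u` is already
inner to that block itself. Reading the recursion for the subword `wordOf s b` on the positions `b`
is legitimate because admissibility depends only on the relative order of positions and on their
letters.
-/

open Finset Function

section Partitions

variable {g : Finset ℕ} {u : Finset (Finset ℕ)}

lemma IsPartitionOn.subset (hu : IsPartitionOn g u) {b : Finset ℕ} (hb : b ∈ u) : b ⊆ g :=
  hu.2.2 ▸ le_sup (f := id) hb

lemma IsPartitionOn.exists_mem (hu : IsPartitionOn g u) {j : ℕ} (hj : j ∈ g) :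
    ∃ b ∈ u, j ∈ b := by
  rw [← hu.2.2] at hj
  simpa using mem_sup.1 hj

lemma IsPartitionOn.eq_of_mem_of_mem (hu : IsPartitionOn g u) {b b' : Finset ℕ} (hb : b ∈ u)
    (hb' : b' ∈ u) {j : ℕ} (hjb : j ∈ b) (hjb' : j ∈ b') : b = b' :=
  hu.2.1.elim hb hb' (not_disjoint_iff.2 ⟨j, hjb, hjb'⟩)

lemma InnerPos.mono {j : ℕ} {c b : Finset ℕ} (h : InnerPos j c) (hcb : c ⊆ b) (hj : j ∉ b) :
    InnerPos j b := by
  obtain ⟨-, i, hi, k, hk, hij, hjk⟩ := h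
  exact ⟨hj, i, hcb hi, k, hcb hk, hij, hjk⟩

lemma mem_APfin {s : Word} {P : Finset (Finset ℕ)} :
    P ∈ APfin s g ↔ IsPartitionOn g P ∧ Admissible s P := by
  classical
  rw [APfin, mem_filter, and_iff_right_iff_imp]
  exact fun h => mem_powerset.2 fun b hb => mem_powerset.2 (h.1.subset hb)

lemma subset_of_mem_APfin {s : Word} {P : Finset (Finset ℕ)} (hP : P ∈ APfin s g)
    {c : Finset ℕ} (hc : c ∈ P) : c ⊆ g :=
  (mem_APfin.1 hP).1.subset hc

lemma IsPartitionOn.eq_of_mem_APfin_of_subset {s : Word} (hu : IsPartitionOn g u) {b b' : Finset ℕ}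
    (hb : b ∈ u) (hb' : b' ∈ u) {Q : Finset (Finset ℕ)} (hQ : Q ∈ APfin s b) {c : Finset ℕ}
    (hc : c ∈ Q) (hcb' : c ⊆ b') : b = b' := by
  obtain ⟨j, hj⟩ := (mem_APfin.1 hQ).1.1 c hc
  exact hu.eq_of_mem_of_mem hb hb' (subset_of_mem_APfin hQ hc hj) (hcb' hj)

end Partitions

lemma image_image_of_leftInvOn {α β : Type*} [DecidableEq α] [DecidableEq β] {f : α → β}
    {f' : β → α} {s : Finset α} (h : Set.LeftInvOn f' f s) : (s.image f).image f' = s := by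
  rw [image_image, image_congr h.eqOn, image_id]

section Transport

variable {s t : Word} {g : Finset ℕ} {e : ℕ → ℕ}

lemma sort_image_of_strictMonoOn {c : Finset ℕ} (he : StrictMonoOn e c) :
    (c.image e).sort = c.sort.map e := by
  rw [Finset.sort, image_val_of_injOn he.injOn,
    ← Multiset.map_sort e c.1 (· ≤ ·) (· ≤ ·) fun a ha b hb => (he.le_iff_le ha hb).symm]
  rfl

lemma wordOf_image {c : Finset ℕ} (he : StrictMonoOn e c)
    (hlet : ∀ j ∈ c, letterAt t (e j) = letterAt s j) :
    wordOf t (c.image e) = wordOf s c := by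
  rw [wordOf, wordOf, sort_image_of_strictMonoOn he, List.map_map]
  exact List.map_congr_left fun j hj => hlet j ((mem_sort _).1 hj)

lemma innerPos_image_iff (he : StrictMonoOn e g) {j : ℕ} (hj : j ∈ g) {c : Finset ℕ}
    (hc : c ⊆ g) : InnerPos (e j) (c.image e) ↔ InnerPos j c := by
  have hmem : e j ∈ c.image e ↔ j ∈ c := by
    refine ⟨fun h => ?_, mem_image_of_mem e⟩
    obtain ⟨i, hi, hij⟩ := mem_image.1 h
    exact he.injOn (hc hi) hj hij ▸ hi
  simp only [InnerPos, hmem, exists_mem_image]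
  refine and_congr_right fun _ => exists_congr fun i => and_congr_right fun hi =>
    exists_congr fun k => and_congr_right fun hk => ?_
  rw [he.lt_iff_lt (hc hi) hj, he.lt_iff_lt hj (hc hk)]

lemma IsPartitionOn.image {P : Finset (Finset ℕ)} (he : Set.InjOn e g) (hP : IsPartitionOn g P) :
    IsPartitionOn (g.image e) (P.image (image e)) := by
  refine ⟨?_, ?_, ?_⟩
  · simp only [mem_image, forall_exists_index, and_imp, forall_apply_eq_imp_iff₂]
    exact fun c hc => (hP.1 c hc).image e
  · rintro _ hb _ hb' hne
    obtain ⟨c, hc, rfl⟩ := mem_image.1 hb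
    obtain ⟨c', hc', rfl⟩ := mem_image.1 hb'
    have hinj : Set.InjOn e (↑c ∪ ↑c') :=
      he.mono (Set.union_subset (coe_subset.2 (hP.subset hc)) (coe_subset.2 (hP.subset hc')))
    have hdisj : Disjoint c c' := hP.2.1 hc hc' fun h => hne (h ▸ rfl)
    rw [Function.onFun, id, id, disjoint_iff_inter_eq_empty, ← image_inter_of_injOn _ _ hinj,
      disjoint_iff_inter_eq_empty.1 hdisj, image_empty]
  · rw [sup_image, ← hP.2.2, sup_eq_biUnion, sup_eq_biUnion, biUnion_image]
    rfl

lemma Admissible.image {P : Finset (Finset ℕ)} (he : StrictMonoOn e g)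
    (hlet : ∀ j ∈ g, letterAt t (e j) = letterAt s j) (hPg : ∀ c ∈ P, c ⊆ g)
    (hP : Admissible s P) : Admissible t (P.image (image e)) := by
  simp only [Admissible, mem_image, forall_exists_index, and_imp, forall_apply_eq_imp_iff₂]
  intro c hc c' hc' hcc' j hj hw
  rw [innerPos_image_iff he (hPg c hc hj) (hPg c' hc')]
  exact hP c hc c' hc' (fun h => hcc' (h ▸ rfl)) j hj (hlet j (hPg c hc hj) ▸ hw)

lemma image_mem_APfin {P : Finset (Finset ℕ)} (he : StrictMonoOn e g)
    (hlet : ∀ j ∈ g, letterAt t (e j) = letterAt s j) (hP : P ∈ APfin s g) :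
    P.image (image e) ∈ APfin t (g.image e) := by
  obtain ⟨hpart, hadm⟩ := mem_APfin.1 hP
  exact mem_APfin.2 ⟨hpart.image he.injOn, hadm.image he hlet fun c => hpart.subset⟩

lemma StrictMonoOn.invFunOn_image (he : StrictMonoOn e g) :
    StrictMonoOn (invFunOn e g) ↑(g.image e) := by
  rintro _ hx _ hy hxy
  obtain ⟨a, ha, rfl⟩ := mem_image.1 hx
  obtain ⟨b, hb, rfl⟩ := mem_image.1 hy
  rw [he.injOn.leftInvOn_invFunOn ha, he.injOn.leftInvOn_invFunOn hb]
  exact (he.lt_iff_lt ha hb).1 hxy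

lemma sum_APfin_image {R : Type*} [CommSemiring R] (F : Word → R) (he : StrictMonoOn e g)
    (hlet : ∀ j ∈ g, letterAt t (e j) = letterAt s j) :
    ∑ P ∈ APfin t (g.image e), ∏ c ∈ P, F (wordOf t c) =
      ∑ P ∈ APfin s g, ∏ c ∈ P, F (wordOf s c) := by
  set e' := invFunOn e g
  have hleft : Set.LeftInvOn e' e g := he.injOn.leftInvOn_invFunOn
  have hright : Set.LeftInvOn e e' ↑(g.image e) := by
    rw [coe_image]
    exact (Set.surjOn_image e g).rightInvOn_invFunOn
  have hlet' : ∀ y ∈ g.image e, letterAt s (e' y) = letterAt t y := by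
    intro y hy
    obtain ⟨j, hj, rfl⟩ := mem_image.1 hy
    rw [hleft hj, hlet j hj]
  have hblocks {r : Word} {Q : Finset (Finset ℕ)} {h : Finset ℕ} {f f' : ℕ → ℕ}
      (hQ : Q ∈ APfin r h) (hff' : Set.LeftInvOn f' f h) :
      Set.LeftInvOn (image f') (image f) Q := fun c hc =>
    image_image_of_leftInvOn (hff'.mono (coe_subset.2 (subset_of_mem_APfin hQ hc)))
  refine (sum_nbij' (fun P => P.image (image e)) (fun Q => Q.image (image e')) ?_ ?_ ?_ ?_ ?_).symm
  · exact fun P hP => image_mem_APfin he hlet hP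
  · intro Q hQ
    have := image_mem_APfin he.invFunOn_image hlet' hQ
    rwa [image_image_of_leftInvOn hleft] at this
  · exact fun P hP => image_image_of_leftInvOn (hblocks hP hleft)
  · exact fun Q hQ => image_image_of_leftInvOn (hblocks hQ hright)
  · intro P hP
    rw [prod_image (hblocks hP hleft).injOn]
    refine prod_congr rfl fun c hc => ?_
    have hcg := subset_of_mem_APfin hP hc
    rw [wordOf_image (he.mono (coe_subset.2 hcg)) fun j hj => hlet j (hcg hj)]

end Transport

lemma length_wordOf (s : Word) (b : Finset ℕ) : (wordOf s b).length = b.card := by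
  simp [wordOf]

lemma moment_wordOf_eq_sum_APfin {M L : Word → ℂ} (hL : IsCumulants M L) (s : Word)
    {b : Finset ℕ} (hb : b.Nonempty) :
    M (wordOf s b) = ∑ Q ∈ APfin s b, ∏ c ∈ Q, L (wordOf s c) := by
  set e : ℕ → ℕ := fun j => b.sort.getD j 0
  have hlen : b.sort.length = b.card := length_sort _
  have he_get (j : ℕ) (hj : j < (b.sort (· ≤ ·)).length) : e j = (b.sort (· ≤ ·))[j] :=
    List.getD_eq_getElem _ _ hj
  have he : StrictMonoOn e ↑(range b.card) := by
    intro j hj k hk hjk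
    simp only [coe_range, Set.mem_Iio, ← hlen] at hj hk
    rw [he_get j hj, he_get k hk]
    exact (sortedLT_sort b).getElem_lt_getElem_iff.2 hjk
  have himage : (range b.card).image e = b := by
    ext y
    simp only [mem_image, mem_range, ← hlen, ← mem_sort (· ≤ ·) (s := b), List.mem_iff_getElem]
    exact exists_congr fun j => ⟨fun ⟨hj, hy⟩ => ⟨hj, he_get j hj ▸ hy⟩,
      fun ⟨hj, hy⟩ => ⟨hj, (he_get j hj).symm ▸ hy⟩⟩
  have hlet : ∀ j ∈ range b.card, letterAt s (e j) = letterAt (wordOf s b) j := by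
    intro j hj
    rw [mem_range, ← hlen] at hj
    have hj' : j < (wordOf s b).length := by rwa [length_wordOf, ← hlen]
    change _ = (wordOf s b).getD j Letter.z
    rw [List.getD_eq_getElem _ _ hj']
    simp only [wordOf, List.getElem_map, he_get j hj]
  have hne : wordOf s b ≠ [] := by
    rw [← List.length_pos_iff, length_wordOf]
    exact hb.card_pos
  rw [hL _ hne, length_wordOf, ← sum_APfin_image L he hlet, himage]

section Gluing

variable {s : Word} {g : Finset ℕ} {u : Finset (Finset ℕ)}

lemma filter_subset_mem_APfin {v : Finset (Finset ℕ)} (hu : IsPartitionOn g u)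
    (hv : v ∈ APfin s g) (hvu : Refines v u) {b : Finset ℕ} (hb : b ∈ u) :
    v.filter (· ⊆ b) ∈ APfin s b := by
  obtain ⟨⟨hne, hdisj, hsup⟩, hadm⟩ := mem_APfin.1 hv
  refine mem_APfin.2 ⟨⟨fun c hc => hne c (mem_filter.1 hc).1,
    hdisj.subset (coe_subset.2 (filter_subset _ _)), ?_⟩,
    fun c hc c' hc' => hadm c (mem_filter.1 hc).1 c' (mem_filter.1 hc').1⟩
  refine le_antisymm (Finset.sup_le fun c hc => (mem_filter.1 hc).2) fun j hj => ?_
  obtain ⟨c, hc, hjc⟩ := (mem_APfin.1 hv).1.exists_mem (hu.subset hb hj)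
  obtain ⟨b', hb', hcb'⟩ := hvu c hc
  obtain rfl := hu.eq_of_mem_of_mem hb hb' hj (hcb' hjc)
  exact mem_sup.2 ⟨c, mem_filter.2 ⟨hc, hcb'⟩, hjc⟩

lemma biUnion_mem_APfin (hu : u ∈ APfin s g) {p : ∀ b ∈ u, Finset (Finset ℕ)}
    (hp : ∀ b hb, p b hb ∈ APfin s b) : u.attach.biUnion (fun b => p b.1 b.2) ∈ APfin s g := by
  obtain ⟨hpart, hadm⟩ := mem_APfin.1 hu
  have hmem {c : Finset ℕ} : c ∈ u.attach.biUnion (fun b => p b.1 b.2) ↔ ∃ b hb, c ∈ p b hb := by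
    simp
  have hsub {b : Finset ℕ} (hb : b ∈ u) {c : Finset ℕ} (hc : c ∈ p b hb) : c ⊆ b :=
    subset_of_mem_APfin (hp b hb) hc
  refine mem_APfin.2 ⟨⟨fun c hc => ?_, fun c hc c' hc' hcc' => ?_, ?_⟩,
    fun c hc c' hc' hcc' j hj hw => ?_⟩
  · obtain ⟨b, hb, hc⟩ := hmem.1 hc
    exact (mem_APfin.1 (hp b hb)).1.1 c hc
  · obtain ⟨b, hb, hc⟩ := hmem.1 hc
    obtain ⟨b', hb', hc'⟩ := hmem.1 hc'
    by_cases hbb' : b = b'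
    · subst hbb'
      exact (mem_APfin.1 (hp b hb)).1.2.1 hc hc' hcc'
    · exact (hpart.2.1 hb hb' hbb').mono (hsub hb hc) (hsub hb' hc')
  · rw [sup_biUnion, ← hpart.2.2, ← sup_attach u id]
    exact sup_congr rfl fun b _ => (mem_APfin.1 (hp b.1 b.2)).1.2.2
  · obtain ⟨b, hb, hc⟩ := hmem.1 hc
    obtain ⟨b', hb', hc'⟩ := hmem.1 hc'
    by_cases hbb' : b = b'
    · subst hbb'
      exact (mem_APfin.1 (hp b hb)).2 c hc c' hc' hcc' j hj hw
    · have hjb' : j ∉ b' := disjoint_left.1 (hpart.2.1 hb hb' hbb') (hsub hb hc hj)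
      exact fun hinner =>
        hadm b hb b' hb' hbb' j (hsub hb hc hj) hw (hinner.mono (hsub hb' hc') hjb')

open scoped Classical in
theorem prod_sum_APfin_eq_sum_refines {R : Type*} [CommSemiring R] (F : Finset ℕ → R)
    (hu : u ∈ APfin s g) :
    ∏ b ∈ u, ∑ Q ∈ APfin s b, ∏ c ∈ Q, F c =
      ∑ v ∈ (APfin s g).filter (Refines · u), ∏ c ∈ v, F c := by
  have hpart := (mem_APfin.1 hu).1
  rw [prod_sum]
  refine sum_nbij' (fun p => u.attach.biUnion fun b => p b.1 b.2)
    (fun v b _ => v.filter (· ⊆ b)) (fun p hp => ?_) (fun v hv => ?_) (fun p hp => ?_)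
    (fun v hv => ?_) (fun p hp => ?_)
  · rw [mem_pi] at hp
    refine mem_filter.2 ⟨biUnion_mem_APfin hu hp, fun c hc => ?_⟩
    obtain ⟨b, -, hc⟩ := mem_biUnion.1 hc
    exact ⟨b.1, b.2, subset_of_mem_APfin (hp b.1 b.2) hc⟩
  · obtain ⟨hv, hvu⟩ := mem_filter.1 hv
    exact mem_pi.2 fun b hb => filter_subset_mem_APfin hpart hv hvu hb
  · rw [mem_pi] at hp
    funext b hb
    ext c
    simp only [mem_filter, mem_biUnion, mem_attach, true_and, Subtype.exists]
    constructor
    · rintro ⟨⟨b', hb', hc⟩, hcb⟩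
      obtain rfl := hpart.eq_of_mem_APfin_of_subset hb' hb (hp b' hb') hc hcb
      exact hc
    · exact fun hc => ⟨⟨b, hb, hc⟩, subset_of_mem_APfin (hp b hb) hc⟩
  · ext c
    simp only [mem_biUnion, mem_attach, true_and, mem_filter, Subtype.exists]
    refine ⟨fun ⟨_, _, hc, _⟩ => hc, fun hc => ?_⟩
    obtain ⟨b, hb, hcb⟩ := (mem_filter.1 hv).2 c hc
    exact ⟨b, hb, hc, hcb⟩
  · rw [mem_pi] at hp
    rw [prod_biUnion fun b _ b' _ hbb' => disjoint_left.2 fun c hc hc' =>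
      hbb' (Subtype.ext (hpart.eq_of_mem_APfin_of_subset b.2 b'.2 (hp _ _) hc
        (subset_of_mem_APfin (hp _ _) hc')))]

end Gluing

open scoped Classical in
theorem moment_eq_sum_cumulants_over_refinements_general (M L : Word → ℂ)
    (hL : IsCumulants M L)
    (s : Word)
    (u : Finset (Finset ℕ)) (hu : u ∈ APfin s (Finset.range s.length)) :
    ∏ b ∈ u, M (wordOf s b) =
      ∑ v ∈ (APfin s (Finset.range s.length)).filter (fun v => Refines v u),
        ∏ b ∈ v, L (wordOf s b) := by
  rw [prod_congr rfl fun b hb => moment_wordOf_eq_sum_APfin hL s ((mem_APfin.1 hu).1.1 b hb)]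
  exact prod_sum_APfin_eq_sum_refines (fun c => L (wordOf s c)) hu

open scoped Classical in
/-- for every admissible partition `u` of `s`,
`M(u) = Σ_{v ∈ AP(s), v ≤ u} L(v)`, where `M(u)`, `L(v)` denote the products of the
values of `M`, `L` over the blocks. -/
theorem moment_eq_sum_cumulants_over_refinements (M L : Word → ℂ)
    (hM1 : M [] = 1) (hL : IsCumulants M L)
    (s : Word) (hs : s ≠ [])
    (u : Finset (Finset ℕ)) (hu : u ∈ APfin s (Finset.range s.length)) :
    ∏ b ∈ u, M (wordOf s b) =
      ∑ v ∈ (APfin s (Finset.range s.length)).filter (fun v => Refines v u),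
        ∏ b ∈ v, L (wordOf s b) :=
  moment_eq_sum_cumulants_over_refinements_general M L hL s u hu
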